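/- Let X: U → ℝ³ be an isothermal regular parametrized surface (E = G, F-coefficient = 0) with Euclidean Gaussian curvature K, mean curvature H, and unit normal N. Let g_F = h(t)⁻²·g₀ with t = ⟨X,X⟩ and h positive differentiable. Then the Gaussian curvature of the induced metric from g_F is K̃ = h(t)²K + 4(h(t)h''(t) − h'(t)²)(t − ⟨X,N⟩²) + 4h(t)h'(t)(1 + H⟨X,N⟩). -/

import Mathlib

/- Proposition 4.1: for an isothermal regular surface X (E = G, F-coeff = 0)
   with unit normal N and mean curvature H, and a radial conformal factor
   h(t)⁻², t = ⟨X,X⟩, the Gaussian curvature K̃ of the induced metric from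
   g_F = h(t)⁻²g₀ satisfies
   K̃ = h²K + 4(hh'' − h'²)(t − ⟨X,N⟩²) + 4hh'(1 + H⟨X,N⟩),
   where K and K̃ are computed by the isothermal formula
   K = −(1/2E)[(E_v/E)_v + (E_u/E)_u]. -/

noncomputable section

open scoped RealInnerProductSpace

abbrev E3 := EuclideanSpace ℝ (Fin 3)

/-- ∂X/∂u. -/
def Xu (X : ℝ → ℝ → E3) (u v : ℝ) : E3 := deriv (fun s => X s v) u

/-- ∂X/∂v. -/
def Xv (X : ℝ → ℝ → E3) (u v : ℝ) : E3 := deriv (fun s => X u s) v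

/-- The coefficient E = ⟨X_u, X_u⟩ of the first fundamental form. -/
def Ecoef (X : ℝ → ℝ → E3) (u v : ℝ) : ℝ := ⟪Xu X u v, Xu X u v⟫

/-- Gaussian curvature of a conformally flat metric Ec·(du² + dv²) in isothermal
coordinates: K = −(1/2Ec)[(Ec_v/Ec)_v + (Ec_u/Ec)_u]. -/
def gaussOf (Ec : ℝ → ℝ → ℝ) (u v : ℝ) : ℝ :=
  -1 / (2 * Ec u v) *
    (deriv (fun s => deriv (fun w => Ec u w) s / Ec u s) v +
     deriv (fun s => deriv (fun w => Ec w v) s / Ec s v) u)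


/- Auxiliary lemmas -/

section Aux

variable {X : ℝ → ℝ → E3}

lemma hasDerivAt_line1 (hX : ContDiff ℝ (⊤ : ℕ∞) fun p : ℝ × ℝ => X p.1 p.2) (u v : ℝ) :
    HasDerivAt (fun s => X s v) (fderiv ℝ (fun p : ℝ × ℝ => X p.1 p.2) (u, v) (1, 0)) u := by
  have hd := (hX.differentiable (by simp) (u, v)).hasFDerivAt
  have := hd.comp_hasDerivAt u ((hasDerivAt_id u).prodMk (hasDerivAt_const u v))
  exact this

lemma hasDerivAt_line2 (hX : ContDiff ℝ (⊤ : ℕ∞) fun p : ℝ × ℝ => X p.1 p.2) (u v : ℝ) :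
    HasDerivAt (fun s => X u s) (fderiv ℝ (fun p : ℝ × ℝ => X p.1 p.2) (u, v) (0, 1)) v := by
  have hd := (hX.differentiable (by simp) (u, v)).hasFDerivAt
  have := hd.comp_hasDerivAt v ((hasDerivAt_const v u).prodMk (hasDerivAt_id v))
  exact this

lemma Xu_eq (hX : ContDiff ℝ (⊤ : ℕ∞) fun p : ℝ × ℝ => X p.1 p.2) (u v : ℝ) :
    Xu X u v = fderiv ℝ (fun p : ℝ × ℝ => X p.1 p.2) (u, v) (1, 0) :=
  (hasDerivAt_line1 hX u v).deriv

lemma Xv_eq (hX : ContDiff ℝ (⊤ : ℕ∞) fun p : ℝ × ℝ => X p.1 p.2) (u v : ℝ) :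
    Xv X u v = fderiv ℝ (fun p : ℝ × ℝ => X p.1 p.2) (u, v) (0, 1) :=
  (hasDerivAt_line2 hX u v).deriv

lemma hasDerivAt_X1 (hX : ContDiff ℝ (⊤ : ℕ∞) fun p : ℝ × ℝ => X p.1 p.2) (u v : ℝ) :
    HasDerivAt (fun s => X s v) (Xu X u v) u := by
  rw [Xu_eq hX]; exact hasDerivAt_line1 hX u v

lemma hasDerivAt_X2 (hX : ContDiff ℝ (⊤ : ℕ∞) fun p : ℝ × ℝ => X p.1 p.2) (u v : ℝ) :
    HasDerivAt (fun s => X u s) (Xv X u v) v := by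
  rw [Xv_eq hX]; exact hasDerivAt_line2 hX u v

lemma contDiff_Xu (hX : ContDiff ℝ (⊤ : ℕ∞) fun p : ℝ × ℝ => X p.1 p.2) :
    ContDiff ℝ (⊤ : ℕ∞) (fun p : ℝ × ℝ => Xu X p.1 p.2) := by
  have : (fun p : ℝ × ℝ => Xu X p.1 p.2)
      = fun p : ℝ × ℝ => fderiv ℝ (fun p : ℝ × ℝ => X p.1 p.2) p (1, 0) := by
    funext p; exact Xu_eq hX p.1 p.2
  rw [this]
  exact (hX.fderiv_right (by simp)).clm_apply contDiff_const

lemma contDiff_Xv (hX : ContDiff ℝ (⊤ : ℕ∞) fun p : ℝ × ℝ => X p.1 p.2) :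
    ContDiff ℝ (⊤ : ℕ∞) (fun p : ℝ × ℝ => Xv X p.1 p.2) := by
  have : (fun p : ℝ × ℝ => Xv X p.1 p.2)
      = fun p : ℝ × ℝ => fderiv ℝ (fun p : ℝ × ℝ => X p.1 p.2) p (0, 1) := by
    funext p; exact Xv_eq hX p.1 p.2
  rw [this]
  exact (hX.fderiv_right (by simp)).clm_apply contDiff_const


end Aux

lemma deriv_smooth {F : Type*} [NormedAddCommGroup F] [NormedSpace ℝ F] {f : ℝ → F}
    (hf : ContDiff ℝ (⊤ : ℕ∞) f) : ContDiff ℝ (⊤ : ℕ∞) (deriv f) :=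
  (contDiff_infty_iff_deriv.mp (hf.of_le (by simp))).2

lemma tau_deriv {c : ℝ → E3} (hc : ContDiff ℝ (⊤ : ℕ∞) c) (s : ℝ) :
    deriv (fun w => ⟪c w, c w⟫) s = 2 * ⟪c s, deriv c s⟫ := by
  have h1 : HasDerivAt c (deriv c s) s := (hc.differentiable (by simp) s).hasDerivAt
  have := (h1.inner ℝ h1).deriv
  rw [this, real_inner_comm (deriv c s) (c s)]; ring

lemma tau_deriv2 {c : ℝ → E3} (hc : ContDiff ℝ (⊤ : ℕ∞) c) (u : ℝ) :
    deriv (deriv (fun w => ⟪c w, c w⟫)) u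
      = 2 * (⟪deriv c u, deriv c u⟫ + ⟪c u, deriv (deriv c) u⟫) := by
  have hd : deriv (fun w => ⟪c w, c w⟫) = fun s => 2 * ⟪c s, deriv c s⟫ :=
    funext fun s => tau_deriv hc s
  rw [hd]
  have h1 : HasDerivAt c (deriv c u) u := (hc.differentiable (by simp) u).hasDerivAt
  have h2 : HasDerivAt (deriv c) (deriv (deriv c) u) u :=
    ((deriv_smooth hc).differentiable (by simp) u).hasDerivAt
  have h3 := ((h1.inner ℝ h2).const_mul (2:ℝ)).deriv
  rw [h3]; ring

lemma logderiv_1d (e τ h : ℝ → ℝ) (he : ContDiff ℝ (⊤ : ℕ∞) e) (hτ : ContDiff ℝ (⊤ : ℕ∞) τ)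
    (hh : ContDiff ℝ (⊤ : ℕ∞) h) (hep : ∀ s, 0 < e s) (hhp : ∀ t, 0 < h t) (u : ℝ) :
    deriv (fun s => deriv (fun w => e w / h (τ w) ^ 2) s / (e s / h (τ s) ^ 2)) u
      = deriv (fun s => deriv e s / e s) u
        - 2 * (((deriv (deriv h) (τ u) * deriv τ u ^ 2
              + deriv h (τ u) * deriv (deriv τ) u) * h (τ u)
              - deriv h (τ u) ^ 2 * deriv τ u ^ 2) / h (τ u) ^ 2) := by
  have key : (fun s => deriv (fun w => e w / h (τ w) ^ 2) s / (e s / h (τ s) ^ 2))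
      = fun s => deriv e s / e s - 2 * (deriv h (τ s) * deriv τ s / h (τ s)) := by
    funext s
    have he' : HasDerivAt e (deriv e s) s := (he.differentiable (by simp) s).hasDerivAt
    have hτ' : HasDerivAt τ (deriv τ s) s := (hτ.differentiable (by simp) s).hasDerivAt
    have hhτ : HasDerivAt (fun w => h (τ w)) (deriv h (τ s) * deriv τ s) s :=
      ((hh.differentiable (by simp) (τ s)).hasDerivAt).comp s hτ'
    have hB : HasDerivAt (fun w => h (τ w) ^ 2)
        ((2 : ℕ) * h (τ s) ^ 1 * (deriv h (τ s) * deriv τ s)) s := hhτ.pow 2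
    have hBne : h (τ s) ^ 2 ≠ 0 := pow_ne_zero 2 (hhp _).ne'
    have hq : deriv (fun w => e w / h (τ w) ^ 2) s = _ := (he'.div hB hBne).deriv
    rw [hq]
    have h0 : h (τ s) ≠ 0 := (hhp _).ne'
    have e0 : e s ≠ 0 := (hep _).ne'
    field_simp
    ring
  rw [key]
  have hde : ContDiff ℝ (⊤:ℕ∞) (deriv e) := deriv_smooth he
  have hdτ : ContDiff ℝ (⊤:ℕ∞) (deriv τ) := deriv_smooth hτ
  have hdh : ContDiff ℝ (⊤:ℕ∞) (deriv h) := deriv_smooth hh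
  have d1 : DifferentiableAt ℝ (fun s => deriv e s / e s) u :=
    (hde.differentiable (by simp) u).div (he.differentiable (by simp) u) (hep u).ne'
  have hτ' : HasDerivAt τ (deriv τ u) u := (hτ.differentiable (by simp) u).hasDerivAt
  have hA : HasDerivAt (fun s => deriv h (τ s)) (deriv (deriv h) (τ u) * deriv τ u) u :=
    ((hdh.differentiable (by simp) (τ u)).hasDerivAt).comp u hτ'
  have hB : HasDerivAt (deriv τ) (deriv (deriv τ) u) u :=
    (hdτ.differentiable (by simp) u).hasDerivAt
  have hC : HasDerivAt (fun s => h (τ s)) (deriv h (τ u) * deriv τ u) u :=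
    ((hh.differentiable (by simp) (τ u)).hasDerivAt).comp u hτ'
  have hfull : HasDerivAt (fun s => deriv h (τ s) * deriv τ s / h (τ s))
      (((deriv (deriv h) (τ u) * deriv τ u * deriv τ u
          + deriv h (τ u) * deriv (deriv τ) u) * h (τ u)
        - deriv h (τ u) * deriv τ u * (deriv h (τ u) * deriv τ u)) / h (τ u) ^ 2) u :=
    (hA.mul hB).div hC ((hhp (τ u)).ne')
  have d2 : DifferentiableAt ℝ (fun s => 2 * (deriv h (τ s) * deriv τ s / h (τ s))) u :=
    (hfull.differentiableAt).const_mul 2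
  rw [deriv_fun_sub d1 d2, deriv_const_mul 2 hfull.differentiableAt, hfull.deriv]
  have h0 : h (τ u) ≠ 0 := (hhp _).ne'
  field_simp


set_option maxHeartbeats 1000000 in
lemma parseval3 (x a b n : E3) (E : ℝ) (hE : 0 < E) (ha : ⟪a, a⟫ = E) (hb : ⟪b, b⟫ = E)
    (hab : ⟪a, b⟫ = 0) (hn : ‖n‖ = 1) (hna : ⟪n, a⟫ = 0) (hnb : ⟪n, b⟫ = 0) :
    ⟪x, x⟫ * E = ⟪x, a⟫ ^ 2 + ⟪x, b⟫ ^ 2 + ⟪x, n⟫ ^ 2 * E := by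
  set sE := Real.sqrt E with hsEdef
  have hsE : sE ^ 2 = E := Real.sq_sqrt hE.le
  have hsE0 : sE ≠ 0 := by positivity
  set f : Fin 3 → E3 := ![sE⁻¹ • a, sE⁻¹ • b, n] with hf
  have hnn : ⟪n, n⟫ = 1 := by
    rw [real_inner_self_eq_norm_sq, hn]; norm_num
  have hba : ⟪b, a⟫ = 0 := by rw [← real_inner_comm]; exact hab
  have han : ⟪a, n⟫ = 0 := by rw [← real_inner_comm]; exact hna
  have hbn : ⟪b, n⟫ = 0 := by rw [← real_inner_comm]; exact hnb
  have horm : Orthonormal ℝ f := by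
    rw [orthonormal_iff_ite]
    intro i j
    fin_cases i <;> fin_cases j <;>
      · simp [-PiLp.inner_apply, -inner_self_eq_norm_sq_to_K, hf, real_inner_smul_left, real_inner_smul_right,
          ha, hb, hab, hba, han, hbn, hna, hnb, hnn]
        try (field_simp; linarith [hsE])
  have hcard : Fintype.card (Fin 3) = Module.finrank ℝ E3 := by
    simp [finrank_euclideanSpace]
  let bas := basisOfLinearIndependentOfCardEqFinrank horm.linearIndependent hcard
  have hbas : ⇑bas = f := coe_basisOfLinearIndependentOfCardEqFinrank _ _
  let onb := bas.toOrthonormalBasis (by rwa [hbas])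
  have honb : ⇑onb = f := by
    simp only [onb, Module.Basis.coe_toOrthonormalBasis, hbas]
  have hsum := onb.sum_inner_mul_inner x x
  rw [Fin.sum_univ_three] at hsum
  simp only [honb, hf, Matrix.cons_val_zero, Matrix.cons_val_one, Matrix.head_cons,
    Matrix.cons_val_two, Matrix.tail_cons, real_inner_smul_left, real_inner_smul_right] at hsum
  have h1 : ⟪a, x⟫ = ⟪x, a⟫ := by rw [real_inner_comm]
  have h2 : ⟪b, x⟫ = ⟪x, b⟫ := by rw [real_inner_comm]
  have h3 : ⟪n, x⟫ = ⟪x, n⟫ := by rw [real_inner_comm]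
  rw [h1, h2, h3] at hsum
  have hxx : ⟪x, x⟫ = sE⁻¹ * ⟪x, a⟫ * (sE⁻¹ * ⟪x, a⟫) + sE⁻¹ * ⟪x, b⟫ * (sE⁻¹ * ⟪x, b⟫)
      + ⟪x, n⟫ * ⟪x, n⟫ := by linarith [hsum]
  rw [hxx]
  field_simp
  nlinarith [hsE, sq_nonneg (⟪x,a⟫ : ℝ)]


theorem stmt16 (X N : ℝ → ℝ → E3) (H : ℝ → ℝ → ℝ) (h : ℝ → ℝ)
    (hX : ContDiff ℝ (⊤ : ℕ∞) fun p : ℝ × ℝ => X p.1 p.2)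
    (hh : ContDiff ℝ (⊤ : ℕ∞) h) (hpos : ∀ t, 0 < h t)
    (hiso : ∀ u v, ⟪Xu X u v, Xu X u v⟫ = ⟪Xv X u v, Xv X u v⟫)
    (horth : ∀ u v, ⟪Xu X u v, Xv X u v⟫ = 0)
    (hreg : ∀ u v, 0 < Ecoef X u v)
    (hNunit : ∀ u v, ‖N u v‖ = 1)
    (hNu : ∀ u v, ⟪N u v, Xu X u v⟫ = 0)
    (hNv : ∀ u v, ⟪N u v, Xv X u v⟫ = 0)
    (hlap : ∀ u v, deriv (fun s => Xu X s v) u + deriv (fun s => Xv X u s) v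
      = (2 * Ecoef X u v * H u v) • N u v)
    (u v : ℝ) :
    gaussOf (fun a b => Ecoef X a b / (h ⟪X a b, X a b⟫) ^ 2) u v
      = (h ⟪X u v, X u v⟫) ^ 2 * gaussOf (Ecoef X) u v
        + 4 * (h ⟪X u v, X u v⟫ * deriv (deriv h) ⟪X u v, X u v⟫
            - (deriv h ⟪X u v, X u v⟫) ^ 2)
            * (⟪X u v, X u v⟫ - ⟪X u v, N u v⟫ ^ 2)
        + 4 * h ⟪X u v, X u v⟫ * deriv h ⟪X u v, X u v⟫
            * (1 + H u v * ⟪X u v, N u v⟫) := by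
  -- line restrictions are smooth
  have hcu : ContDiff ℝ (⊤ : ℕ∞) (fun s => X s v) :=
    hX.comp (ContDiff.prodMk (contDiff_id (E := ℝ)) contDiff_const)
  have hcv : ContDiff ℝ (⊤ : ℕ∞) (fun s => X u s) :=
    hX.comp (ContDiff.prodMk (contDiff_const (c := u)) contDiff_id)
  have hXuJ := contDiff_Xu hX
  have hXvJ := contDiff_Xv hX
  have hXu_u : ContDiff ℝ (⊤ : ℕ∞) (fun s => Xu X s v) :=
    hXuJ.comp (ContDiff.prodMk (contDiff_id (E := ℝ)) contDiff_const)
  have hXu_v : ContDiff ℝ (⊤ : ℕ∞) (fun s => Xu X u s) :=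
    hXuJ.comp (ContDiff.prodMk (contDiff_const (c := u)) contDiff_id)
  -- E along lines
  have heu : ContDiff ℝ (⊤ : ℕ∞) (fun s => Ecoef X s v) := by
    unfold Ecoef; exact ContDiff.inner ℝ hXu_u hXu_u
  have hev : ContDiff ℝ (⊤ : ℕ∞) (fun s => Ecoef X u s) := by
    unfold Ecoef; exact ContDiff.inner ℝ hXu_v hXu_v
  -- t along lines
  have hτu : ContDiff ℝ (⊤ : ℕ∞) (fun s => (⟪X s v, X s v⟫ : ℝ)) := ContDiff.inner ℝ hcu hcu
  have hτv : ContDiff ℝ (⊤ : ℕ∞) (fun s => (⟪X u s, X u s⟫ : ℝ)) := ContDiff.inner ℝ hcv hcv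
  -- the two 1d log-derivative computations
  have Hu : deriv (fun s => deriv (fun w => Ecoef X w v / h ⟪X w v, X w v⟫ ^ 2) s
        / (Ecoef X s v / h ⟪X s v, X s v⟫ ^ 2)) u
      = deriv (fun s => deriv (fun w => Ecoef X w v) s / Ecoef X s v) u
        - 2 * (((deriv (deriv h) ⟪X u v, X u v⟫ * deriv (fun s => (⟪X s v, X s v⟫:ℝ)) u ^ 2
              + deriv h ⟪X u v, X u v⟫ * deriv (deriv (fun s => (⟪X s v, X s v⟫:ℝ))) u) * h ⟪X u v, X u v⟫
              - deriv h ⟪X u v, X u v⟫ ^ 2 * deriv (fun s => (⟪X s v, X s v⟫:ℝ)) u ^ 2) / h ⟪X u v, X u v⟫ ^ 2) :=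
    logderiv_1d (fun s => Ecoef X s v) (fun s => ⟪X s v, X s v⟫) h heu hτu hh
      (fun s => hreg s v) hpos u
  have Hv : deriv (fun s => deriv (fun w => Ecoef X u w / h ⟪X u w, X u w⟫ ^ 2) s
        / (Ecoef X u s / h ⟪X u s, X u s⟫ ^ 2)) v
      = deriv (fun s => deriv (fun w => Ecoef X u w) s / Ecoef X u s) v
        - 2 * (((deriv (deriv h) ⟪X u v, X u v⟫ * deriv (fun s => (⟪X u s, X u s⟫:ℝ)) v ^ 2
              + deriv h ⟪X u v, X u v⟫ * deriv (deriv (fun s => (⟪X u s, X u s⟫:ℝ))) v) * h ⟪X u v, X u v⟫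
              - deriv h ⟪X u v, X u v⟫ ^ 2 * deriv (fun s => (⟪X u s, X u s⟫:ℝ)) v ^ 2) / h ⟪X u v, X u v⟫ ^ 2) :=
    logderiv_1d (fun s => Ecoef X u s) (fun s => ⟪X u s, X u s⟫) h hev hτv hh
      (fun s => hreg u s) hpos v
  -- first derivatives of t
  have hdu1 : deriv (fun s => (⟪X s v, X s v⟫:ℝ)) u = 2 * ⟪X u v, Xu X u v⟫ := tau_deriv hcu u
  have hdv1 : deriv (fun s => (⟪X u s, X u s⟫:ℝ)) v = 2 * ⟪X u v, Xv X u v⟫ := tau_deriv hcv v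
  -- second derivatives of t
  have hdu2 : deriv (deriv (fun s => (⟪X s v, X s v⟫:ℝ))) u
      = 2 * (Ecoef X u v + ⟪X u v, deriv (fun s => Xu X s v) u⟫) := tau_deriv2 hcu u
  have hdv2 : deriv (deriv (fun s => (⟪X u s, X u s⟫:ℝ))) v
      = 2 * (Ecoef X u v + ⟪X u v, deriv (fun s => Xv X u s) v⟫) := by
    have hA := tau_deriv2 hcv v
    have hB : (⟪deriv (fun s => X u s) v, deriv (fun s => X u s) v⟫ : ℝ) = Ecoef X u v :=
      (hiso u v).symm
    rw [hA, hB]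
    rfl
  -- Laplacian term
  have hsum2 : ⟪X u v, deriv (fun s => Xu X s v) u⟫ + ⟪X u v, deriv (fun s => Xv X u s) v⟫
      = 2 * Ecoef X u v * H u v * ⟪X u v, N u v⟫ := by
    rw [← inner_add_right, hlap u v, real_inner_smul_right]
  -- Parseval
  have hpar := parseval3 (X u v) (Xu X u v) (Xv X u v) (N u v) (Ecoef X u v) (hreg u v)
    rfl (hiso u v).symm (horth u v) (hNunit u v) (hNu u v) (hNv u v)
  -- assemble
  simp only [gaussOf]
  rw [Hu, Hv, hdu1, hdv1, hdu2, hdv2]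
  set E0 := Ecoef X u v with hE0
  set t0 := (⟪X u v, X u v⟫ : ℝ) with ht0
  set q := (⟪X u v, N u v⟫ : ℝ) with hq
  set pu := (⟪X u v, Xu X u v⟫ : ℝ) with hpu
  set pv := (⟪X u v, Xv X u v⟫ : ℝ) with hpv
  set au := (⟪X u v, deriv (fun s => Xu X s v) u⟫ : ℝ) with hau
  set av := (⟪X u v, deriv (fun s => Xv X u s) v⟫ : ℝ) with hav
  set h0 := h t0
  set h1 := deriv h t0
  set h2 := deriv (deriv h) t0
  set H0 := H u v
  set du := deriv (fun s => deriv (fun w => Ecoef X w v) s / Ecoef X s v) u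
  set dv := deriv (fun s => deriv (fun w => Ecoef X u w) s / Ecoef X u s) v
  have hE0p : (0:ℝ) < E0 := hreg u v
  have hh0 : (0:ℝ) < h0 := hpos t0
  have hE0ne : E0 ≠ 0 := hE0p.ne'
  have hh0ne : h0 ≠ 0 := hh0.ne'
  field_simp
  linear_combination (-8*h0*h2 + 8*h1^2) * hpar + 4*h0*h1 * hsum2
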